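/- Let f : [0,1] → [0,∞) be a continuous excursion function such that for infinitely many n ∈ ℕ there exists an interval [s,t] ⊆ [0,1] with s < t satisfying sup_{u∈[0,1]} |f(s + (t−s)u) − f(s) − √(t−s)·F_n(u)| < √(t−s)·2^{1−n}. Then the continuum tree T_f = ([0,1]/≈_f, d_f) is starry; in particular T_f has infinite Assouad dimension and is not doubling. -/

import Mathlib

open Set

/-- The continuum-tree distance associated to an excursion function `f`. -/
noncomputable def treeDist (f : ℝ → ℝ) (x y : ℝ) : ℝ :=
  f x + f y - 2 * sInf (f '' Set.Icc (min x y) (max x y))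

/-- The continuum-tree distance restricted to `[0,1]`; the continuum tree `T_f` is the
quotient metric space of `([0,1], dIcc f)` by identifying points at distance `0`. -/
noncomputable def dIcc (f : ℝ → ℝ) (a b : Set.Icc (0 : ℝ) 1) : ℝ :=
  treeDist f a b

/-- The zig-zag function `F_n`. -/
noncomputable def zigzag (n : ℕ) (x : ℝ) : ℝ :=
  if x < 1 / (2 * n) then 2 * n * x
  else if (2 * n - 1) / (2 * n) ≤ x then -2 * n * x + 2 * n
  else if ⌊2 * (n : ℝ) * x⌋ % 2 = 1 then
    -(n : ℝ) * x + (2 * (((⌊2 * (n : ℝ) * x⌋ - 1) / 2 : ℤ) : ℝ) + 3) / 2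
  else (n : ℝ) * x - ((⌊2 * (n : ℝ) * x⌋ / 2 - 1 : ℤ) : ℝ) - 1 / 2

/-- A pseudometric-like distance function `d` admits an `(A,η)`-approximate `n`-star. -/
def HasStarD {α : Type*} (d : α → α → ℝ) (A η : ℝ) (n : ℕ) : Prop :=
  ∃ ρ : ℝ, 0 < ρ ∧ ∃ x : Fin (n + 1) → α,
    (∀ i j : Fin (n + 1), i ≠ 0 → j ≠ 0 → i ≠ j →
      (A - η) * ρ ≤ d (x i) (x j) ∧ d (x i) (x j) ≤ A * ρ) ∧
    (∀ i : Fin (n + 1), i ≠ 0 → ρ ≤ d (x 0) (x i) ∧ d (x 0) (x i) ≤ (1 + η) * ρ)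

/-- The distance function `d` is starry. -/
def StarryD {α : Type*} (d : α → α → ℝ) : Prop :=
  ∃ A η : ℝ, 1 < A ∧ 0 < η ∧ η < (A - 1) / 2 ∧
    ∀ n : ℕ, ∃ An : ℝ, A ≤ An ∧ HasStarD d An η n

/-- The distance function `d` is doubling: some `K` balls of radius `r/2` cover each ball of
radius `r`. -/
def DoublingD {α : Type*} (d : α → α → ℝ) : Prop :=
  ∃ K : ℕ, 0 < K ∧ ∀ (x : α) (r : ℝ), 0 < r →
    ∃ c : Finset α, c.card ≤ K ∧ ∀ y : α, d x y ≤ r → ∃ z ∈ c, d z y ≤ r / 2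

/-- The distance function `d` satisfies the Assouad covering condition with exponent `a`. -/
def FiniteAssouadWithD {α : Type*} (d : α → α → ℝ) (a : ℝ) : Prop :=
  ∃ C : ℝ, 0 < C ∧ ∀ (x : α) (R r : ℝ), 0 < r → r < R → R < 1 →
    ∃ 𝒰 : Finset (Set α),
      (∀ U ∈ 𝒰, ∀ p ∈ U, ∀ q ∈ U, d p q ≤ r) ∧
      ({y : α | d x y ≤ R} ⊆ ⋃ U ∈ 𝒰, U) ∧
      (𝒰.card : ℝ) ≤ C * (R / r) ^ a

/-
Inside a window `[s, t]` on which `f` follows `f s + √(t-s) · F_m` up to `√(t-s) · 2^{1-m}`,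
the peaks `(2k+1)/(2m)` of `F_m` (value `1`) are separated by its valleys `k/m` (value `1/2`).
A uniform perturbation by `δ` moves the tree distance by at most `4δ`, so two peaks are at
distance `≈ √(t-s)` and every peak is at distance `≈ √(t-s)/2` from the first valley. That valley
as centre and the `n` peaks to its right as leaves form an approximate `n`-star with `A ≈ 2` at
a scale `ρ ≤ 1/2`. A ball of radius `(1 + η)ρ` about the centre then needs at least `n` sets of
diameter `ρ`, and at least `n` balls of half its radius, to be covered; and `n` is arbitrary.
-/

theorem treeDist_eq_sInf_uIcc (f : ℝ → ℝ) (x y : ℝ) :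
    treeDist f x y = f x + f y - 2 * sInf (f '' uIcc x y) := rfl

theorem treeDist_comm (f : ℝ → ℝ) (x y : ℝ) : treeDist f x y = treeDist f y x := by
  simp only [treeDist_eq_sInf_uIcc, uIcc_comm x y]
  ring

theorem treeDist_triangle {f : ℝ → ℝ} {s : Set ℝ} (hs : s.OrdConnected) (hf : BddBelow (f '' s))
    {x y z : ℝ} (hx : x ∈ s) (hy : y ∈ s) (hz : z ∈ s) :
    treeDist f x z ≤ treeDist f x y + treeDist f y z := by
  have hbdd : ∀ {a b}, a ∈ s → b ∈ s → BddBelow (f '' uIcc a b) := fun ha hb =>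
    hf.mono (image_mono (hs.uIcc_subset ha hb))
  have hxy : sInf (f '' uIcc x y) ≤ f y :=
    csInf_le (hbdd hx hy) (mem_image_of_mem f right_mem_uIcc)
  have hyz : sInf (f '' uIcc y z) ≤ f y :=
    csInf_le (hbdd hy hz) (mem_image_of_mem f left_mem_uIcc)
  have hxz : min (sInf (f '' uIcc x y)) (sInf (f '' uIcc y z)) ≤ sInf (f '' uIcc x z) := by
    rw [← csInf_union (hbdd hx hy) (nonempty_uIcc.image f) (hbdd hy hz)
      (nonempty_uIcc.image f), ← image_union]
    exact csInf_le_csInf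
      (hf.mono (image_mono (union_subset (hs.uIcc_subset hx hy) (hs.uIcc_subset hy hz))))
      (nonempty_uIcc.image f) (image_mono uIcc_subset_uIcc_union_uIcc)
  have : sInf (f '' uIcc x y) + sInf (f '' uIcc y z) - f y ≤
      min (sInf (f '' uIcc x y)) (sInf (f '' uIcc y z)) := le_min (by linarith) (by linarith)
  simp only [treeDist_eq_sInf_uIcc]
  linarith

theorem sInf_image_le_sInf_image_add {α : Type*} {g h : α → ℝ} {I : Set α} {δ : ℝ}
    (hI : I.Nonempty) (hg : BddBelow (g '' I)) (hgh : ∀ u ∈ I, g u ≤ h u + δ) :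
    sInf (g '' I) ≤ sInf (h '' I) + δ := by
  have : sInf (g '' I) - δ ≤ sInf (h '' I) := by
    refine le_csInf (hI.image h) ?_
    rintro _ ⟨u, hu, rfl⟩
    linarith [csInf_le hg (mem_image_of_mem g hu), hgh u hu]
  linarith

theorem abs_treeDist_sub_le {g h : ℝ → ℝ} {x y δ : ℝ} (hg : BddBelow (g '' uIcc x y))
    (hgh : ∀ u ∈ uIcc x y, |g u - h u| ≤ δ) :
    |treeDist g x y - treeDist h x y| ≤ 4 * δ := by
  have hh : BddBelow (h '' uIcc x y) := by
    obtain ⟨L, hL⟩ := hg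
    refine ⟨L - δ, ?_⟩
    rintro _ ⟨u, hu, rfl⟩
    linarith [hL (mem_image_of_mem g hu), (abs_le.1 (hgh u hu)).2]
  have hinf₁ := sInf_image_le_sInf_image_add nonempty_uIcc hg fun u hu =>
    (by linarith [(abs_le.1 (hgh u hu)).2] : g u ≤ h u + δ)
  have hinf₂ := sInf_image_le_sInf_image_add nonempty_uIcc hh fun u hu =>
    (by linarith [(abs_le.1 (hgh u hu)).1] : h u ≤ g u + δ)
  have hx := abs_le.1 (hgh x left_mem_uIcc)
  have hy := abs_le.1 (hgh y right_mem_uIcc)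
  rw [treeDist_eq_sInf_uIcc, treeDist_eq_sInf_uIcc, abs_le]
  constructor <;> linarith

theorem treeDist_eq_of_isMinOn {f : ℝ → ℝ} {x y v : ℝ} (hv : v ∈ uIcc x y)
    (hmin : IsMinOn f (uIcc x y) v) : treeDist f x y = f x + f y - 2 * f v := by
  rw [treeDist_eq_sInf_uIcc, IsLeast.csInf_eq ⟨mem_image_of_mem f hv, ?_⟩]
  rintro _ ⟨u, hu, rfl⟩
  exact hmin hu

theorem treeDist_comp_const_add_mul (f : ℝ → ℝ) (c a x y : ℝ) :
    treeDist (fun u => f (c + a * u)) x y = treeDist f (c + a * x) (c + a * y) := by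
  simp only [treeDist_eq_sInf_uIcc]
  rw [show (fun u => f (c + a * u)) = f ∘ (c + ·) ∘ (a * ·) from rfl, image_comp, image_comp,
    image_const_mul_uIcc, image_const_add_uIcc]

theorem dIcc_comm (f : ℝ → ℝ) (x y : Icc (0 : ℝ) 1) : dIcc f x y = dIcc f y x :=
  treeDist_comm f x y

theorem dIcc_triangle {f : ℝ → ℝ} (hf : ∀ u ∈ Icc (0 : ℝ) 1, 0 ≤ f u) (x y z : Icc (0 : ℝ) 1) :
    dIcc f x z ≤ dIcc f x y + dIcc f y z :=
  treeDist_triangle ordConnected_Icc ⟨0, by rintro _ ⟨u, hu, rfl⟩; exact hf u hu⟩ x.2 y.2 z.2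

theorem zigzag_even {m k : ℕ} (hk : 1 ≤ k) (hkm : k < m) :
    zigzag m (2 * k / (2 * m)) = 1 / 2 := by
  have hm : (0 : ℝ) < m := by exact_mod_cast (show 0 < m by omega)
  have hk' : (1 : ℝ) ≤ k := by exact_mod_cast hk
  have hkm' : (k : ℝ) + 1 ≤ m := by exact_mod_cast hkm
  have hx : 2 * (m : ℝ) * (2 * k / (2 * m)) = ((2 * k : ℤ) : ℝ) := by
    push_cast
    field_simp
  unfold zigzag
  rw [if_neg (by rw [not_lt, div_le_div_iff_of_pos_right (by positivity)]; linarith),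
    if_neg (by rw [not_le, div_lt_div_iff_of_pos_right (by positivity)]; linarith),
    hx, Int.floor_intCast, if_neg (by omega), show 2 * (k : ℤ) / 2 - 1 = k - 1 by omega]
  push_cast
  field_simp
  ring

theorem zigzag_odd {m k : ℕ} (hk : 1 ≤ k) (hkm : k + 1 < m) :
    zigzag m ((2 * k + 1) / (2 * m)) = 1 := by
  have hm : (0 : ℝ) < m := by exact_mod_cast (show 0 < m by omega)
  have hk' : (1 : ℝ) ≤ k := by exact_mod_cast hk
  have hkm' : (k : ℝ) + 1 < m := by exact_mod_cast hkm
  have hx : 2 * (m : ℝ) * ((2 * k + 1) / (2 * m)) = ((2 * k + 1 : ℤ) : ℝ) := by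
    push_cast
    field_simp
  unfold zigzag
  rw [if_neg (by rw [not_lt, div_le_div_iff_of_pos_right (by positivity)]; linarith),
    if_neg (by rw [not_le, div_lt_div_iff_of_pos_right (by positivity)]; linarith),
    hx, Int.floor_intCast, if_pos (by omega), show (2 * (k : ℤ) + 1 - 1) / 2 = k by omega]
  push_cast
  field_simp
  ring

theorem half_le_zigzag {m : ℕ} (hm : 1 ≤ m) {u : ℝ} (h₁ : 1 / (2 * m) ≤ u)
    (h₂ : u ≤ (2 * m - 1) / (2 * m)) : 1 / 2 ≤ zigzag m u := by
  have hm' : (0 : ℝ) < 2 * m := by positivity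
  unfold zigzag
  rw [if_neg (not_lt.2 h₁)]
  split_ifs with hb hodd
  · have := (le_div_iff₀ hm').1 h₂
    nlinarith
  · have hlt : 2 * (m : ℝ) * u < ⌊2 * (m : ℝ) * u⌋ + 1 := Int.lt_floor_add_one _
    obtain ⟨k, hk⟩ : ∃ k : ℤ, ⌊2 * (m : ℝ) * u⌋ = 2 * k + 1 :=
      ⟨(⌊2 * (m : ℝ) * u⌋ - 1) / 2, by omega⟩
    rw [hk, show (2 * k + 1 - 1) / 2 = k by omega]
    rw [hk] at hlt
    push_cast at hlt ⊢
    linarith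
  · have hle : (⌊2 * (m : ℝ) * u⌋ : ℝ) ≤ 2 * m * u := Int.floor_le _
    obtain ⟨k, hk⟩ : ∃ k : ℤ, ⌊2 * (m : ℝ) * u⌋ = 2 * k := ⟨⌊2 * (m : ℝ) * u⌋ / 2, by omega⟩
    rw [hk, show 2 * k / 2 - 1 = k - 1 by omega]
    rw [hk] at hle
    push_cast at hle ⊢
    linarith

theorem zigzag_isMinOn_even {m k : ℕ} (hk : 1 ≤ k) (hkm : k < m) :
    IsMinOn (zigzag m) (Icc (1 / (2 * m)) ((2 * m - 1) / (2 * m))) (2 * k / (2 * m)) :=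
  fun _ hu => (zigzag_even hk hkm).trans_le (half_le_zigzag (hk.trans hkm.le) hu.1 hu.2)

theorem treeDist_const_add_mul_zigzag (c : ℝ) {σ : ℝ} (hσ : 0 ≤ σ) {m k : ℕ} (hk : 1 ≤ k)
    (hkm : k < m) {p q : ℝ} (hp : 1 ≤ p) (hpk : p ≤ 2 * k) (hkq : 2 * k ≤ q)
    (hq : q ≤ 2 * m - 1) :
    treeDist (fun u => c + σ * zigzag m u) (p / (2 * m)) (q / (2 * m)) =
      σ * (zigzag m (p / (2 * m)) + zigzag m (q / (2 * m)) - 1) := by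
  have hpq : uIcc (p / (2 * m)) (q / (2 * m)) = Icc (p / (2 * m)) (q / (2 * m)) :=
    uIcc_of_le (by gcongr; linarith)
  have hmin : IsMinOn (fun u => c + σ * zigzag m u) (uIcc (p / (2 * m)) (q / (2 * m)))
      (2 * k / (2 * m)) := by
    refine ((zigzag_isMinOn_even hk hkm).on_subset ?_).comp_mono (g := fun z => c + σ * z)
      fun a b hab => by dsimp only; gcongr
    rw [hpq]
    exact Icc_subset_Icc (by gcongr) (by gcongr)
  rw [treeDist_eq_of_isMinOn (by rw [hpq]; exact ⟨by gcongr, by gcongr⟩) hmin,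
    zigzag_even hk hkm]
  ring

theorem treeDist_const_add_mul_zigzag_odd_odd (c : ℝ) {σ : ℝ} (hσ : 0 ≤ σ) {m k l : ℕ}
    (hk : 1 ≤ k) (hkl : k < l) (hlm : l + 1 < m) :
    treeDist (fun u => c + σ * zigzag m u) ((2 * k + 1) / (2 * m)) ((2 * l + 1) / (2 * m)) =
      σ := by
  have hkl' : (k : ℝ) + 1 ≤ l := by exact_mod_cast hkl
  have hlm' : (l : ℝ) + 2 ≤ m := by exact_mod_cast hlm
  have hk' : (1 : ℝ) ≤ k := by exact_mod_cast hk
  rw [treeDist_const_add_mul_zigzag c hσ (k := k + 1) (by omega) (by omega)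
    (by linarith) (by push_cast; linarith) (by push_cast; linarith) (by linarith),
    zigzag_odd hk (by omega), zigzag_odd (by omega) hlm]
  ring

theorem treeDist_const_add_mul_zigzag_even_odd (c : ℝ) {σ : ℝ} (hσ : 0 ≤ σ) {m l : ℕ}
    (hl : 1 ≤ l) (hlm : l + 1 < m) :
    treeDist (fun u => c + σ * zigzag m u) (2 / (2 * m)) ((2 * l + 1) / (2 * m)) = σ / 2 := by
  have hlm' : (l : ℝ) + 2 ≤ m := by exact_mod_cast hlm
  have hl' : (1 : ℝ) ≤ l := by exact_mod_cast hl
  have hvalley := zigzag_even (m := m) le_rfl (by omega)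
  rw [Nat.cast_one, mul_one] at hvalley
  rw [treeDist_const_add_mul_zigzag c hσ (k := 1) le_rfl (by omega) (by norm_num)
    (by norm_num) (by push_cast; linarith) (by linarith), hvalley, zigzag_odd hl hlm]
  ring

/-- The valley `1/m` of `F_m` followed by the peaks `(2k+1)/(2m)`, `k = 1, …, n`. -/
noncomputable def zigzagStar (m n : ℕ) : Fin (n + 1) → ℝ :=
  Fin.cons (2 / (2 * m)) fun i => (2 * ((i + 1 : ℕ) : ℝ) + 1) / (2 * m)

theorem zigzagStar_mem_Icc {m n : ℕ} (hnm : n + 2 ≤ m) (i : Fin (n + 1)) :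
    zigzagStar m n i ∈ Icc (0 : ℝ) 1 := by
  have hm : (0 : ℝ) < 2 * m := by exact_mod_cast (show 0 < 2 * m by omega)
  have hnm' : (n : ℝ) + 2 ≤ m := by exact_mod_cast hnm
  refine Fin.cases ?_ (fun i => ?_) i <;> simp only [zigzagStar, Fin.cons_zero, Fin.cons_succ]
  · exact ⟨by positivity, (div_le_one hm).2 (by linarith)⟩
  · have : (i : ℝ) + 1 ≤ n := by exact_mod_cast i.isLt
    exact ⟨by positivity, (div_le_one hm).2 (by push_cast; linarith)⟩

theorem treeDist_zigzagStar_succ_succ (c : ℝ) {σ : ℝ} (hσ : 0 ≤ σ) {m n : ℕ} (hnm : n + 2 ≤ m)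
    {i j : Fin n} (hij : i < j) :
    treeDist (fun u => c + σ * zigzag m u) (zigzagStar m n i.succ) (zigzagStar m n j.succ) =
      σ :=
  treeDist_const_add_mul_zigzag_odd_odd c hσ (by omega) (Nat.succ_lt_succ (Fin.lt_def.1 hij))
    (by omega)

theorem treeDist_zigzagStar_zero_succ (c : ℝ) {σ : ℝ} (hσ : 0 ≤ σ) {m n : ℕ} (hnm : n + 2 ≤ m)
    (i : Fin n) :
    treeDist (fun u => c + σ * zigzag m u) (zigzagStar m n 0) (zigzagStar m n i.succ) =
      σ / 2 :=
  treeDist_const_add_mul_zigzag_even_odd c hσ (by omega) (by omega)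

section Stars

variable {α : Type*}

/-- `x 0` is the centre of the star and `x 1, …, x n` are its leaves. -/
def IsApproxStar {n : ℕ} (d : α → α → ℝ) (A η ρ : ℝ) (x : Fin (n + 1) → α) : Prop :=
  (∀ i j : Fin (n + 1), i ≠ 0 → j ≠ 0 → i ≠ j →
      (A - η) * ρ ≤ d (x i) (x j) ∧ d (x i) (x j) ≤ A * ρ) ∧
    (∀ i : Fin (n + 1), i ≠ 0 → ρ ≤ d (x 0) (x i) ∧ d (x 0) (x i) ≤ (1 + η) * ρ)

theorem hasStarD_iff {d : α → α → ℝ} {A η : ℝ} {n : ℕ} :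
    HasStarD d A η n ↔ ∃ ρ, 0 < ρ ∧ ∃ x : Fin (n + 1) → α, IsApproxStar d A η ρ x :=
  Iff.rfl

theorem isApproxStar_of_abs_sub_le {d : α → α → ℝ} {n : ℕ} {x : Fin (n + 1) → α} {σ δ η : ℝ}
    (hρ : 0 < σ / 2 - δ) (hδ : 2 * δ ≤ η * (σ / 2 - δ))
    (hleaf : ∀ i j : Fin n, i ≠ j → |d (x i.succ) (x j.succ) - σ| ≤ δ)
    (hcenter : ∀ i : Fin n, |d (x 0) (x i.succ) - σ / 2| ≤ δ) :
    IsApproxStar d ((σ + δ) / (σ / 2 - δ)) η (σ / 2 - δ) x := by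
  have hA : (σ + δ) / (σ / 2 - δ) * (σ / 2 - δ) = σ + δ := div_mul_cancel₀ _ hρ.ne'
  constructor
  · intro i j hi hj hij
    obtain ⟨i, rfl⟩ := Fin.exists_succ_eq.2 hi
    obtain ⟨j, rfl⟩ := Fin.exists_succ_eq.2 hj
    have := abs_le.1 (hleaf i j (ne_of_apply_ne Fin.succ hij))
    rw [sub_mul, hA]
    constructor <;> linarith
  · intro i hi
    obtain ⟨i, rfl⟩ := Fin.exists_succ_eq.2 hi
    have := abs_le.1 (hcenter i)
    constructor <;> linarith

theorem card_le_card_of_separated {d : α → α → ℝ} {r : ℝ} {n : ℕ} (x : Fin n → α)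
    (hsep : ∀ i j, i ≠ j → r < d (x i) (x j)) (𝒰 : Finset (Set α))
    (hsmall : ∀ U ∈ 𝒰, ∀ p ∈ U, ∀ q ∈ U, d p q ≤ r) (hcov : ∀ i, ∃ U ∈ 𝒰, x i ∈ U) :
    n ≤ 𝒰.card := by
  choose U hU hxU using hcov
  have := Finset.card_le_card_of_injOn U (s := Finset.univ) (fun i _ => hU i)
    fun i _ j _ hij => by_contra fun hne =>
      (hsep i j hne).not_ge (hsmall _ (hU j) _ (hij ▸ hxU i) _ (hxU j))
  simpa using this

theorem not_doublingD_of_starryD {d : α → α → ℝ} (hcomm : ∀ x y, d x y = d y x)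
    (htri : ∀ x y z, d x z ≤ d x y + d y z) (h : StarryD d) : ¬ DoublingD d := by
  rintro ⟨K, -, hK⟩
  obtain ⟨A₀, η, -, hη, hηA, hstar⟩ := h
  obtain ⟨A, hA, ρ, hρ, x, hleaf, hcenter⟩ := hstar (K + 1)
  set r := (1 + η) * ρ
  obtain ⟨c, hc, hcov⟩ := hK (x 0) r (by positivity)
  let 𝒰 := c.image fun z => {y | d z y ≤ r / 2}
  have hsmall : ∀ U ∈ 𝒰, ∀ p ∈ U, ∀ q ∈ U, d p q ≤ r := by
    simp only [𝒰, Finset.mem_image]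
    rintro _ ⟨z, -, rfl⟩ p (hp : d z p ≤ r / 2) q (hq : d z q ≤ r / 2)
    linarith [htri p z q, hcomm p z]
  have hsep : ∀ i j : Fin (K + 1), i ≠ j → r < d (x i.succ) (x j.succ) := fun i j hij =>
    calc r < (A - η) * ρ := mul_lt_mul_of_pos_right (by linarith) hρ
      _ ≤ _ := (hleaf _ _ (Fin.succ_ne_zero i) (Fin.succ_ne_zero j)
        (Fin.succ_injective _ |>.ne hij)).1
  have hcov' : ∀ i : Fin (K + 1), ∃ U ∈ 𝒰, x i.succ ∈ U := fun i => by
    obtain ⟨z, hz, hzx⟩ := hcov _ (hcenter _ (Fin.succ_ne_zero i)).2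
    exact ⟨_, Finset.mem_image_of_mem _ hz, hzx⟩
  have hcard : 𝒰.card ≤ K := Finset.card_image_le.trans hc
  have := card_le_card_of_separated (x ∘ Fin.succ) hsep 𝒰 hsmall hcov'
  omega

theorem not_finiteAssouadWithD_of_isApproxStar {d : α → α → ℝ} {A₀ η ρ₀ : ℝ} (hη : 0 < η)
    (hA₀ : 1 < A₀ - η) (hρ₀ : (1 + η) * ρ₀ < 1)
    (hstar : ∀ n : ℕ, ∃ A ρ, ∃ x : Fin (n + 1) → α,
      A₀ ≤ A ∧ 0 < ρ ∧ ρ ≤ ρ₀ ∧ IsApproxStar d A η ρ x)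
    (a : ℝ) : ¬ FiniteAssouadWithD d a := by
  rintro ⟨C, -, hC⟩
  obtain ⟨n, hn⟩ := exists_nat_gt (C * (1 + η) ^ a)
  obtain ⟨A, ρ, x, hA, hρ, hρρ₀, hleaf, hcenter⟩ := hstar n
  obtain ⟨𝒰, hsmall, hball, hcard⟩ :=
    hC (x 0) ((1 + η) * ρ) ρ hρ (by nlinarith) (by nlinarith)
  have hsep : ∀ i j : Fin n, i ≠ j → ρ < d (x i.succ) (x j.succ) := fun i j hij =>
    calc ρ < (A - η) * ρ := lt_mul_of_one_lt_left hρ (by linarith)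
      _ ≤ _ := (hleaf _ _ (Fin.succ_ne_zero i) (Fin.succ_ne_zero j)
        (Fin.succ_injective _ |>.ne hij)).1
  have hcov : ∀ i : Fin n, ∃ U ∈ 𝒰, x i.succ ∈ U := fun i => by
    simpa using hball (hcenter _ (Fin.succ_ne_zero i)).2
  have := card_le_card_of_separated (x ∘ Fin.succ) hsep 𝒰 hsmall hcov
  rw [mul_div_cancel_right₀ _ hρ.ne'] at hcard
  have : (n : ℝ) ≤ C * (1 + η) ^ a := (Nat.cast_le.2 this).trans hcard
  linarith

end Stars

theorem add_sub_mul_mem_Icc {s t u : ℝ} (hs : 0 ≤ s) (hst : s ≤ t) (ht : t ≤ 1)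
    (hu : u ∈ Icc (0 : ℝ) 1) : s + (t - s) * u ∈ Icc (0 : ℝ) 1 :=
  ⟨by nlinarith [hu.1], by nlinarith [hu.2]⟩

theorem abs_treeDist_sub_zigzag_le {f : ℝ → ℝ} {s t δ : ℝ} {m : ℕ}
    (hf : ∀ u ∈ Icc (0 : ℝ) 1, 0 ≤ f u) (hs : 0 ≤ s) (hst : s ≤ t) (ht : t ≤ 1)
    (happ : ∀ u ∈ Icc (0 : ℝ) 1,
      |f (s + (t - s) * u) - f s - Real.sqrt (t - s) * zigzag m u| < δ)
    {x y : ℝ} (hx : x ∈ Icc (0 : ℝ) 1) (hy : y ∈ Icc (0 : ℝ) 1) :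
    |treeDist f (s + (t - s) * x) (s + (t - s) * y) -
      treeDist (fun u => f s + Real.sqrt (t - s) * zigzag m u) x y| ≤ 4 * δ := by
  have hsub : uIcc x y ⊆ Icc 0 1 := ordConnected_Icc.uIcc_subset hx hy
  rw [← treeDist_comp_const_add_mul]
  refine abs_treeDist_sub_le ⟨0, ?_⟩ fun u hu => ?_
  · rintro _ ⟨u, hu, rfl⟩
    exact hf _ (add_sub_mul_mem_Icc hs hst ht (hsub hu))
  · rw [← sub_sub]
    exact (happ u (hsub hu)).le

theorem exists_isApproxStar_of_zigzag_approx {f : ℝ → ℝ} (hf : ∀ u ∈ Icc (0 : ℝ) 1, 0 ≤ f u)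
    (happrox : ∀ N : ℕ, ∃ n : ℕ, N ≤ n ∧ ∃ s t : ℝ, 0 ≤ s ∧ s < t ∧ t ≤ 1 ∧
      ∀ u ∈ Icc (0 : ℝ) 1,
        |f (s + (t - s) * u) - f s - Real.sqrt (t - s) * zigzag n u| <
          Real.sqrt (t - s) * (2 : ℝ) ^ (1 - (n : ℤ)))
    (n : ℕ) :
    ∃ A ρ, ∃ x : Fin (n + 1) → Icc (0 : ℝ) 1,
      2 ≤ A ∧ 0 < ρ ∧ ρ ≤ 1 / 2 ∧ IsApproxStar (dIcc f) A (1 / 10) ρ x := by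
  -- `m ≥ n + 2` leaves room for `n` peaks after the first valley; `m ≥ 10` makes `2δ ≤ ρ/10`.
  obtain ⟨m, hm, s, t, hs, hst, ht, happ⟩ := happrox (max (n + 2) 10)
  set σ := Real.sqrt (t - s)
  set δ := 4 * (σ * (2 : ℝ) ^ (1 - (m : ℤ)))
  have hσ : 0 < σ := Real.sqrt_pos.2 (by linarith)
  have hσ₁ : σ ≤ 1 := Real.sqrt_le_one.2 (by linarith)
  have hε : (2 : ℝ) ^ (1 - (m : ℤ)) ≤ 1 / 512 := by
    have : (1 - m : ℤ) ≤ -9 := by omega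
    calc (2 : ℝ) ^ (1 - (m : ℤ)) ≤ 2 ^ (-9 : ℤ) := zpow_le_zpow_right₀ one_le_two this
      _ = 1 / 512 := by norm_num
  have hδ : 0 ≤ δ := by positivity
  have hδσ : δ ≤ σ / 128 := by nlinarith
  have hnm : n + 2 ≤ m := (le_max_left _ _).trans hm
  let x : Fin (n + 1) → Icc (0 : ℝ) 1 := fun i =>
    ⟨s + (t - s) * zigzagStar m n i, add_sub_mul_mem_Icc hs hst.le ht (zigzagStar_mem_Icc hnm i)⟩
  have hclose : ∀ i j, |dIcc f (x i) (x j) -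
      treeDist (fun u => f s + σ * zigzag m u) (zigzagStar m n i) (zigzagStar m n j)| ≤ δ :=
    fun i j => abs_treeDist_sub_zigzag_le hf hs hst.le ht happ (zigzagStar_mem_Icc hnm i)
      (zigzagStar_mem_Icc hnm j)
  refine ⟨(σ + δ) / (σ / 2 - δ), σ / 2 - δ, x, (le_div_iff₀ (by linarith)).2 (by linarith),
    by linarith, by linarith,
    isApproxStar_of_abs_sub_le (by linarith) (by linarith) (fun i j hij => ?_) fun i => ?_⟩
  · rcases hij.lt_or_gt with hij | hij
    · simpa [treeDist_zigzagStar_succ_succ _ hσ.le hnm hij] using hclose i.succ j.succ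
    · rw [dIcc_comm]
      simpa [treeDist_zigzagStar_succ_succ _ hσ.le hnm hij] using hclose j.succ i.succ
  · simpa [treeDist_zigzagStar_zero_succ _ hσ.le hnm i] using hclose 0 i.succ

theorem continuum_tree_starry_of_zigzag_approx_general (f : ℝ → ℝ)
    (hnonneg : ∀ u ∈ Icc (0 : ℝ) 1, 0 ≤ f u)
    (happrox : ∀ N : ℕ, ∃ n : ℕ, N ≤ n ∧ ∃ s t : ℝ, 0 ≤ s ∧ s < t ∧ t ≤ 1 ∧
      ∀ u ∈ Icc (0 : ℝ) 1,
        |f (s + (t - s) * u) - f s - Real.sqrt (t - s) * zigzag n u| <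
          Real.sqrt (t - s) * (2 : ℝ) ^ (1 - (n : ℤ))) :
    StarryD (dIcc f) ∧
    (¬ ∃ a : ℝ, 0 ≤ a ∧ FiniteAssouadWithD (dIcc f) a) ∧
    ¬ DoublingD (dIcc f) := by
  have stars := exists_isApproxStar_of_zigzag_approx hnonneg happrox
  have starry : StarryD (dIcc f) := by
    refine ⟨2, 1 / 10, by norm_num, by norm_num, by norm_num, fun n => ?_⟩
    obtain ⟨A, ρ, x, hA, hρ, -, hx⟩ := stars n
    exact ⟨A, hA, hasStarD_iff.2 ⟨ρ, hρ, x, hx⟩⟩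
  refine ⟨starry, fun ⟨a, _, ha⟩ => ?_, not_doublingD_of_starryD (dIcc_comm f)
    (dIcc_triangle hnonneg) starry⟩
  exact not_finiteAssouadWithD_of_isApproxStar (A₀ := 2) (ρ₀ := 1 / 2) (by norm_num)
    (by norm_num) (by norm_num) stars a ha

/-- If a continuous excursion function `f` contains, for infinitely many
`n`, an interval on which it approximates the rescaled zig-zag `F_n` within
`√(t−s)·2^{1−n}`, then the continuum tree `T_f = ([0,1]/≈_f, d_f)` is starry; in particular
it has infinite Assouad dimension and is not doubling. -/
theorem continuum_tree_starry_of_zigzag_approx (f : ℝ → ℝ)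
    (hcont : ContinuousOn f (Icc 0 1))
    (hf0 : f 0 = 0) (hf1 : f 1 = 0)
    (hpos : ∀ u ∈ Ioo (0 : ℝ) 1, 0 < f u)
    (hnonneg : ∀ u ∈ Icc (0 : ℝ) 1, 0 ≤ f u)
    (happrox : ∀ N : ℕ, ∃ n : ℕ, N ≤ n ∧ ∃ s t : ℝ, 0 ≤ s ∧ s < t ∧ t ≤ 1 ∧
      ∀ u ∈ Icc (0 : ℝ) 1,
        |f (s + (t - s) * u) - f s - Real.sqrt (t - s) * zigzag n u| <
          Real.sqrt (t - s) * (2 : ℝ) ^ (1 - (n : ℤ))) :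
    StarryD (dIcc f) ∧
    (¬ ∃ a : ℝ, 0 ≤ a ∧ FiniteAssouadWithD (dIcc f) a) ∧
    ¬ DoublingD (dIcc f) :=
  continuum_tree_starry_of_zigzag_approx_general f hnonneg happrox
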